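/- arXiv:1110.2822 — 7 statements merged into one kernel-verified Lean document; each statement's English description precedes it below -/
import Mathlib

section
/- For integers b, s, t with 0 ≤ b ≤ t and 1 ≤ s, the determinant of the s×s matrix M whose (i,j) entry is the binomial coefficient C(t, b+(i-1)-(j-1)) equals the product (C(t,b)·C(t+1,b)···C(t+s-1,b)) / (C(b,b)·C(b+1,b)···C(b+s-1,b)), and in particular is a nonzero integer. -/
/-!
Scaling row `i` by `(b + i)! (t - b + s - 1 - i)!` turns the `(i, j)` entry into `t!` times the
product of falling factorials `(b + i)^{(j)} (t - b + s - 1 - i)^{(s - 1 - j)}`. This is an instance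
of Krattenthaler's determinant
`det [∏_{k<j} (x_i + a_k) ∏_{k<s-1-j} (d_k - x_i)]
  = ∏_{r+k<s-1} (a_r + d_k) ∏_{i<i'} (x_{i'} - x_i)`
with `x_i = b + i`, `a_k = -k`, `d_k = t + s - 1 - k`, so every factor
`a_r + d_k = t + s - 1 - r - k` is an integer and both products collapse to factorials.
Krattenthaler's identity follows by adding each column to its left neighbour: this strips one
factor `d_k - x_i` from every column while pulling out a scalar `a_r + d_k`, and after `s` rounds
only a Vandermonde matrix of monic polynomials is left.
-/

open Finset

/-- The Toeplitz matrix `M_{t,b,s,s}` of binomial coefficients, with `(i,j)` entry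
`C(t, b+i-j)` (interpreted as `0` when `b+i-j < 0`). -/
noncomputable def toeplitzBinom (t b s : ℕ) : Matrix (Fin s) (Fin s) ℤ :=
  Matrix.of fun i j : Fin s =>
    if (j : ℕ) ≤ b + (i : ℕ) then (t.choose (b + (i : ℕ) - (j : ℕ)) : ℤ) else 0

open Matrix
open scoped Nat

section Krattenthaler

variable {R : Type*} [CommRing R] {s : ℕ}

theorem det_eq_of_col_eq_add_next {A B : Matrix (Fin s) (Fin s) R} (K : ℕ) (hK : K < s)
    (hadd : ∀ i (r : Fin s) (hr : (r : ℕ) < K), B i r = A i r + A i ⟨r + 1, by omega⟩)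
    (hrest : ∀ i (r : Fin s), K ≤ r → B i r = A i r) : B.det = A.det := by
  induction K generalizing B with
  | zero =>
    congr
    ext i r
    exact hrest i r (Nat.zero_le _)
  | succ K ih =>
    obtain ⟨M, hM⟩ : ∃ M : Matrix (Fin s) (Fin s) R,
        M = updateCol B ⟨K, by omega⟩ fun i => A i ⟨K, by omega⟩ := ⟨_, rfl⟩
    have hMA : M.det = A.det := by
      refine ih (by omega) (fun i r hr => ?_) (fun i r hr => ?_) <;>
        simp only [hM, updateCol_apply, Fin.ext_iff]
      · rw [if_neg (by omega)]
        exact hadd i r (by omega)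
      · split_ifs with hr'
        · rw [show r = ⟨K, by omega⟩ from Fin.ext hr']
        · exact hrest i r (by omega)
    have hBM : B = updateCol M ⟨K, by omega⟩ fun i => M i ⟨K, by omega⟩ + M i ⟨K + 1, hK⟩ := by
      ext i r
      simp only [hM, updateCol_apply, Fin.ext_iff]
      split_ifs with hr'
      · omega
      · rw [show r = ⟨K, by omega⟩ from Fin.ext hr', hadd i _ (Nat.lt_succ_self K),
          hrest i ⟨K + 1, hK⟩ le_rfl]
      · rfl
    rw [hBM, det_updateCol_add_self _ (by simp [Fin.ext_iff]), hMA]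

variable (x : Fin s → R) (a d : ℕ → R)

/-- The matrix of `det_prod_add_mul_prod_sub` after `m` rounds of adding every column to its left
neighbour and dividing out the resulting scalars. -/
def sweepMatrix (m : ℕ) : Matrix (Fin s) (Fin s) R :=
  of fun i j => (∏ k ∈ range j, (x i + a k)) * ∏ k ∈ range (s - 1 - j - m), (d k - x i)

theorem sweepMatrix_add_next (m : ℕ) (i r r' : Fin s) (hr' : (r' : ℕ) = r + 1)
    (hr : (r : ℕ) + m + 2 ≤ s) :
    sweepMatrix x a d m i r + sweepMatrix x a d m i r' =
      (a r + d (s - 2 - r - m)) * sweepMatrix x a d (m + 1) i r := by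
  simp only [sweepMatrix, of_apply, hr']
  rw [show s - 1 - r - m = s - 2 - r - m + 1 by omega,
    show s - 1 - (r + 1) - m = s - 2 - r - m by omega,
    show s - 1 - r - (m + 1) = s - 2 - r - m by omega, prod_range_succ, prod_range_succ]
  ring

theorem det_sweepMatrix_eq_mul_succ (m : ℕ) :
    (sweepMatrix x a d m).det =
      (∏ r ∈ range (s - 1 - m), (a r + d (s - 2 - r - m))) * (sweepMatrix x a d (m + 1)).det := by
  rcases Nat.eq_zero_or_pos s with rfl | hs
  · simp
  set c : ℕ → R := fun r => if r < s - 1 - m then a r + d (s - 2 - r - m) else 1 with hc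
  have hdet : (of fun i j : Fin s => c j * sweepMatrix x a d (m + 1) i j).det =
      (sweepMatrix x a d m).det := by
    refine det_eq_of_col_eq_add_next (s - 1 - m) (by omega) (fun i r hr => ?_)
      (fun i r hr => ?_) <;> simp only [of_apply, hc]
    · rw [if_pos hr, sweepMatrix_add_next x a d m i r _ rfl (by omega)]
    · rw [if_neg (by omega), one_mul]
      simp only [sweepMatrix, of_apply, show s - 1 - r - m = 0 by omega,
        show s - 1 - r - (m + 1) = 0 by omega]
  rw [← hdet, det_mul_row (fun j : Fin s => c j), Fin.prod_univ_eq_prod_range c,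
    ← prod_range_mul_prod_Ico c (show s - 1 - m ≤ s by omega),
    prod_congr rfl (fun r hr => if_pos (mem_range.mp hr)),
    prod_eq_one (s := Ico _ _) (fun r hr => if_neg (by rw [mem_Ico] at hr; omega)), mul_one]

theorem det_sweepMatrix_zero_eq (M : ℕ) :
    (sweepMatrix x a d 0).det = (∏ m ∈ range M, ∏ r ∈ range (s - 1 - m),
      (a r + d (s - 2 - r - m))) * (sweepMatrix x a d M).det := by
  induction M with
  | zero => simp
  | succ M ih => rw [ih, det_sweepMatrix_eq_mul_succ, prod_range_succ, mul_assoc]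

open Polynomial in
theorem det_sweepMatrix_self : (sweepMatrix x a d s).det = (vandermonde x).det := by
  nontriviality R
  rw [det_eval_matrixOfPolynomials_eq_det_vandermonde x (fun j => ∏ k ∈ range j, (X + C (a k)))
    (fun j => by simp [natDegree_prod_of_monic _ _ fun k _ => monic_X_add_C _])
    (fun j => monic_prod_of_monic _ _ fun k _ => monic_X_add_C _)]
  congr
  ext i j
  simp [sweepMatrix, eval_prod, show s - 1 - j - s = 0 by omega]

theorem det_prod_add_mul_prod_sub :
    (of fun i j : Fin s => (∏ k ∈ range j, (x i + a k)) * ∏ k ∈ range (s - 1 - j), (d k - x i)).det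
      = (∏ r ∈ range s, ∏ k ∈ range (s - 1 - r), (a r + d k)) * (vandermonde x).det := by
  change (sweepMatrix x a d 0).det = _
  rw [det_sweepMatrix_zero_eq x a d s, det_sweepMatrix_self,
    prod_comm' (s' := fun r => range (s - 1 - r)) (t' := range s)
      (by intros; simp only [mem_range]; omega)]
  congr 1
  refine prod_congr rfl fun r _ => ?_
  rw [← prod_range_reflect (fun k => a r + d k)]
  exact prod_congr rfl fun m _ => by congr 2; omega

end Krattenthaler

theorem Nat.cast_descFactorial_eq_prod_range {R : Type*} [CommRing R] (n k : ℕ) :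
    (n.descFactorial k : R) = ∏ i ∈ range k, ((n : R) - i) := by
  rw [← descPochhammer_eval_eq_descFactorial, descPochhammer_eval_eq_prod_range]

theorem Nat.factorial_mul_factorial_mul_choose {N L j J t : ℕ} (hj : j ≤ N)
    (h : N + L = t + j + J) :
    N ! * L ! * t.choose (N - j) = t ! * N.descFactorial j * L.descFactorial J := by
  rcases le_or_gt (N - j) t with hNt | htN
  · rw [← factorial_mul_descFactorial hj, ← factorial_mul_descFactorial (show J ≤ L by omega),
      ← choose_mul_factorial_mul_factorial hNt, show L - J = t - (N - j) by omega]
    ring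
  · rw [choose_eq_zero_of_lt htN, descFactorial_eq_zero_iff_lt.mpr (show L < J by omega)]
    simp

theorem Nat.add_choose_mul_factorial_eq_add_choose_mul_factorial {b t : ℕ} (hb : b ≤ t) (j : ℕ) :
    (b + j).choose b * ((t + j)! * j !) = (t + j).choose b * ((b + j)! * (t - b + j)!) := by
  have hb' := choose_mul_factorial_mul_factorial (Nat.le_add_right b j)
  have ht := choose_mul_factorial_mul_factorial (show b ≤ t + j by omega)
  rw [Nat.add_sub_cancel_left] at hb'
  rw [show t + j - b = t - b + j by omega] at ht
  rw [← hb', ← ht]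
  ring

theorem det_vandermonde_natCast_eq_prod_range_factorial (s : ℕ) :
    (vandermonde fun i : Fin s => (i : ℤ)).det = ∏ j ∈ range s, (j ! : ℤ) := by
  rcases s with _ | n
  · simp
  · rw [det_vandermonde_id_eq_superFactorial, ← Nat.prod_range_succ_factorial]
    push_cast
    rfl

theorem toeplitzBinom_apply_mul_factorial {t b s : ℕ} (hb : b ≤ t) (i j : Fin s) :
    ((b + i)! * (t - b + (s - 1 - i))! : ℤ) * toeplitzBinom t b s i j =
      t ! * ((b + i).descFactorial j * (t - b + (s - 1 - i)).descFactorial (s - 1 - j) : ℕ) := by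
  simp only [toeplitzBinom, of_apply]
  split_ifs with hj
  · have h := Nat.factorial_mul_factorial_mul_choose (L := t - b + (s - 1 - i)) (J := s - 1 - j)
      (t := t) hj (by omega)
    rw [mul_assoc (t !)] at h
    exact_mod_cast h
  · rw [Nat.descFactorial_eq_zero_iff_lt.mpr (by omega)]
    simp

theorem factorial_pow_mul_prod_prod_eq_prod_factorial (t s : ℕ) :
    (t ! : ℤ) ^ s * ∏ r ∈ range s, ∏ k ∈ range (s - 1 - r), (-(r : ℤ) + ((t + s - 1 : ℤ) - k)) =
      ∏ j ∈ range s, ((t + j)! : ℤ) := by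
  rw [show (t ! : ℤ) ^ s = ∏ _r ∈ range s, (t ! : ℤ) by simp, ← prod_mul_distrib,
    ← prod_range_reflect (fun j => ((t + j)! : ℤ))]
  refine prod_congr rfl fun r hr => ?_
  rw [mem_range] at hr
  have hcast (k : ℕ) : -(r : ℤ) + ((t + s - 1 : ℤ) - k) = ((t + (s - 1 - r) : ℕ) : ℤ) - k := by
    omega
  simp only [hcast, ← Nat.cast_descFactorial_eq_prod_range]
  have h := Nat.factorial_mul_descFactorial (Nat.le_add_left (s - 1 - r) t)
  rw [Nat.add_sub_cancel] at h
  exact_mod_cast h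

theorem prod_factorial_mul_det_toeplitzBinom {t b s : ℕ} (hb : b ≤ t) :
    (∏ j ∈ range s, ((b + j)! * (t - b + j)! : ℤ)) * (toeplitzBinom t b s).det =
      ∏ j ∈ range s, ((t + j)! * j ! : ℤ) := by
  have hscaled : (of fun i j : Fin s => ((b + i)! * (t - b + (s - 1 - i))! : ℤ) *
      toeplitzBinom t b s i j) = (t ! : ℤ) • of fun i j : Fin s =>
        (∏ k ∈ range j, (((i : ℤ) + b) + -(k : ℤ))) *
          ∏ k ∈ range (s - 1 - j), (((t + s - 1 : ℤ) - k) - ((i : ℤ) + b)) := by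
    ext i j
    rw [of_apply, Matrix.smul_apply, toeplitzBinom_apply_mul_factorial hb, of_apply, smul_eq_mul,
      Nat.cast_mul, Nat.cast_descFactorial_eq_prod_range, Nat.cast_descFactorial_eq_prod_range]
    congr 2 <;> exact prod_congr rfl fun k _ => by omega
  have h := congrArg det hscaled
  rw [det_mul_column, det_smul, det_prod_add_mul_prod_sub, det_vandermonde_add,
    det_vandermonde_natCast_eq_prod_range_factorial, Fintype.card_fin, ← mul_assoc,
    factorial_pow_mul_prod_prod_eq_prod_factorial, Fin.prod_univ_eq_prod_range (fun i =>
      ((b + i)! * (t - b + (s - 1 - i))! : ℤ)), prod_mul_distrib,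
    prod_range_reflect (fun i => ((t - b + i)! : ℤ))] at h
  rw [prod_mul_distrib, prod_mul_distrib, h]

theorem stmt0_general (t b s : ℕ) (hb : b ≤ t) :
    (∏ j ∈ Finset.range s, ((b + j).choose b : ℤ)) * (toeplitzBinom t b s).det =
      ∏ j ∈ Finset.range s, ((t + j).choose b : ℤ) ∧
    (toeplitzBinom t b s).det ≠ 0 := by
  have hP : ∏ j ∈ range s, ((b + j)! * (t - b + j)! : ℤ) ≠ 0 :=
    prod_ne_zero_iff.mpr fun j _ => by positivity
  have hchoose : (∏ j ∈ range s, ((b + j).choose b : ℤ)) * ∏ j ∈ range s, ((t + j)! * j ! : ℤ) =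
      (∏ j ∈ range s, ((t + j).choose b : ℤ)) * ∏ j ∈ range s, ((b + j)! * (t - b + j)! : ℤ) := by
    simp only [← prod_mul_distrib]
    exact prod_congr rfl fun j _ => mod_cast
      Nat.add_choose_mul_factorial_eq_add_choose_mul_factorial hb j
  have hdet : (∏ j ∈ range s, ((b + j).choose b : ℤ)) * (toeplitzBinom t b s).det =
      ∏ j ∈ range s, ((t + j).choose b : ℤ) := by
    refine mul_left_cancel₀ hP ?_
    rw [mul_left_comm, prod_factorial_mul_det_toeplitzBinom hb, hchoose, mul_comm]
  refine ⟨hdet, fun h0 => ?_⟩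
  rw [h0, mul_zero, eq_comm, prod_eq_zero_iff] at hdet
  obtain ⟨j, -, hj⟩ := hdet
  exact absurd hj (Nat.cast_ne_zero.mpr (Nat.choose_pos (by omega)).ne')

theorem stmt0 (t b s : ℕ) (hb : b ≤ t) (hs : 1 ≤ s) :
    (∏ j ∈ Finset.range s, ((b + j).choose b : ℤ)) * (toeplitzBinom t b s).det =
      ∏ j ∈ Finset.range s, ((t + j).choose b : ℤ) ∧
    (toeplitzBinom t b s).det ≠ 0 :=
  stmt0_general t b s hb
end

section
/- Let k be a field of characteristic p > 0 and let b, s, t be integers with 0 ≤ b ≤ t, 1 ≤ s, and t + s ≤ p. Then the determinant of the s×s matrix with (i,j) entry C(t, b+i-j), reduced modulo p, is a nonzero element of k. -/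
/-!
A nonzero kernel vector `v` of the matrix gives a nonzero polynomial `q = ∑ vⱼ Xʲ` of degree
`< s` such that `f = (X + 1)ᵗ q` has degree `< t + s` and vanishing coefficients in degrees
`b, …, b + s - 1`; so `f` has at most `t` nonzero coefficients. But a nonzero polynomial of degree
`< p` with a root `a ≠ 0` of multiplicity `≥ t` has at least `t + 1` nonzero coefficients: strip
factors of `X`, and otherwise differentiate, which loses the constant term and keeps the degree
below `p`, so the derivative is nonzero and still has `a` as a root of multiplicity `≥ t - 1`.
-/

open Finset

/-- The Toeplitz matrix `M_{t,b,s,s}` of binomial coefficients over a commutative ring `K`,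
with `(i,j)` entry `C(t, b+i-j)` reduced to `K` (interpreted as `0` when `b+i-j < 0`). -/
noncomputable def toeplitzBinomK (K : Type*) [CommRing K] (t b s : ℕ) :
    Matrix (Fin s) (Fin s) K :=
  Matrix.of fun i j : Fin s =>
    if (j : ℕ) ≤ b + (i : ℕ) then (t.choose (b + (i : ℕ) - (j : ℕ)) : K) else 0

namespace Polynomial

theorem card_support_X_mul {R : Type*} [Semiring R] (g : R[X]) :
    #(X * g).support = #g.support := by
  have : (X * g).support = g.support.map (addRightEmbedding 1) := by
    ext (_ | n) <;> simp [coeff_X_mul]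
  rw [this, card_map]

theorem card_support_derivative_lt {R : Type*} [Semiring R] {f : R[X]} (h0 : f.coeff 0 ≠ 0) :
    #(derivative f).support < #f.support :=
  calc #(derivative f).support ≤ #(f.support.erase 0) :=
        card_le_card_of_injOn (· + 1)
          (fun n hn => mem_erase.2 ⟨n.succ_ne_zero, of_mem_support_derivative hn⟩)
          (fun _ _ _ _ h => Nat.succ_injective h)
    _ < #f.support := card_erase_lt_of_mem (mem_support_iff.2 h0)

theorem derivative_ne_zero_of_natDegree_lt {R : Type*} [Semiring R] [NoZeroDivisors R]
    {p : ℕ} [CharP R p] {f : R[X]} (h0 : f.natDegree ≠ 0) (hp : f.natDegree < p) :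
    derivative f ≠ 0 := by
  have hcast : (f.natDegree : R) ≠ 0 := by
    rw [Ne, CharP.cast_eq_zero_iff R p]
    exact fun hdvd => h0 (Nat.eq_zero_of_dvd_of_lt hdvd hp)
  have hlead : f.leadingCoeff ≠ 0 :=
    leadingCoeff_ne_zero.2 (ne_zero_of_natDegree_gt (Nat.pos_of_ne_zero h0))
  intro h
  have := congrArg (coeff · (f.natDegree - 1)) h
  rw [coeff_derivative, ← Nat.cast_add_one, Nat.sub_add_cancel (Nat.pos_of_ne_zero h0)] at this
  exact mul_ne_zero hlead hcast this

theorem add_one_le_card_support_of_pow_X_sub_C_dvd {K : Type*} [Field K] {p : ℕ} [CharP K p]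
    {a : K} (ha : a ≠ 0) {f : K[X]} (hf : f ≠ 0) (hfp : f.natDegree < p) {t : ℕ}
    (hdvd : (X - C a) ^ t ∣ f) : t + 1 ≤ #f.support := by
  induction hn : f.natDegree using Nat.strong_induction_on generalizing f t with
  | _ n ih =>
  subst hn
  obtain _ | t := t
  · exact card_pos.2 (support_nonempty.2 hf)
  by_cases h0 : f.coeff 0 = 0
  · obtain ⟨g, rfl⟩ := X_dvd_iff.2 h0
    have hg : g ≠ 0 := right_ne_zero_of_mul hf
    have hdeg : g.natDegree < (X * g).natDegree := by rw [natDegree_X_mul hg]; omega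
    have hcop : IsCoprime (X - C a) X :=
      ⟨-C a⁻¹, C a⁻¹, by rw [neg_mul, mul_sub, ← C_mul, inv_mul_cancel₀ ha, C_1]; ring⟩
    rw [card_support_X_mul]
    exact ih _ hdeg hg (hdeg.trans hfp) (hcop.pow_left.dvd_of_dvd_mul_left hdvd) rfl
  · have hpos : f.natDegree ≠ 0 := by
      have := natDegree_le_of_dvd hdvd hf
      rw [natDegree_pow, natDegree_X_sub_C] at this
      omega
    have hdeg := natDegree_derivative_lt hpos
    have := ih _ hdeg (derivative_ne_zero_of_natDegree_lt hpos hfp) (hdeg.trans hfp)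
      (pow_sub_one_dvd_derivative_of_pow_dvd hdvd) rfl
    have := card_support_derivative_lt h0
    omega

theorem card_support_le_of_coeff_eq_zero_of_mem_Ico {R : Type*} [Semiring R] {f : R[X]}
    {t b s : ℕ} (hb : b ≤ t) (hdeg : f.natDegree < t + s)
    (hgap : ∀ n ∈ Ico b (b + s), f.coeff n = 0) : #f.support ≤ t := by
  have hsupp : f.support ⊆ range (t + s) \ Ico b (b + s) := fun n hn => by
    rw [mem_support_iff] at hn
    exact mem_sdiff.2
      ⟨mem_range.2 ((le_natDegree_of_ne_zero hn).trans_lt hdeg), fun h => hn (hgap n h)⟩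
  have hIco : Ico b (b + s) ⊆ range (t + s) := by
    rw [range_eq_Ico]
    exact Ico_subset_Ico (Nat.zero_le b) (by omega)
  simpa [card_sdiff_of_subset hIco] using card_le_card hsupp

theorem coeff_sum_fin_C_mul_X_pow {R : Type*} [Semiring R] {n : ℕ} (v : Fin n → R) (j : Fin n) :
    (∑ i : Fin n, C (v i) * X ^ (i : ℕ)).coeff j = v j := by
  simp [finsetSum_coeff, coeff_X_pow, Fin.val_inj]

end Polynomial

open Polynomial Matrix

theorem toeplitzBinomK_mulVec_apply (K : Type*) [CommRing K] (t b : ℕ) {s : ℕ}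
    (v : Fin s → K) (i : Fin s) :
    (toeplitzBinomK K t b s *ᵥ v) i =
      ((X + 1) ^ t * ∑ j : Fin s, C (v j) * X ^ (j : ℕ)).coeff (b + i) := by
  simp only [mulVec, dotProduct, toeplitzBinomK, of_apply, mul_sum, finsetSum_coeff]
  refine sum_congr rfl fun j _ => ?_
  rw [mul_left_comm, coeff_C_mul, coeff_mul_X_pow', coeff_X_add_one_pow]
  split_ifs <;> ring

theorem stmt1_general (K : Type*) [Field K] (p : ℕ) [CharP K p]
    (t b s : ℕ) (hb : b ≤ t) (hts : t + s ≤ p) :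
    (toeplitzBinomK K t b s).det ≠ 0 := by
  intro hdet
  obtain ⟨v, hv, hMv⟩ := exists_mulVec_eq_zero_iff.2 hdet
  set q : K[X] := ∑ j : Fin s, C (v j) * X ^ (j : ℕ)
  have hq : q ≠ 0 := fun h => hv (funext fun j => by simp [← coeff_sum_fin_C_mul_X_pow v j, q, h])
  have hroot : (X + 1 : K[X]) = X - C (-1) := by rw [C_neg, C_1, sub_neg_eq_add]
  have hpow : (X + 1 : K[X]) ^ t ≠ 0 := pow_ne_zero _ (hroot ▸ X_sub_C_ne_zero _)
  set f : K[X] := (X + 1) ^ t * q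
  have hfdeg : f.natDegree < t + s := by
    have hqdeg : q.natDegree < s := (natDegree_lt_iff_degree_lt hq).2 (degree_sum_fin_lt v)
    rw [natDegree_mul hpow hq, natDegree_pow, hroot, natDegree_X_sub_C]
    omega
  have hgap : ∀ n ∈ Ico b (b + s), f.coeff n = 0 := fun n hn => by
    obtain ⟨h₁, h₂⟩ := mem_Ico.1 hn
    simpa [Nat.add_sub_cancel' h₁] using
      (toeplitzBinomK_mulVec_apply K t b v ⟨n - b, by omega⟩).symm.trans (congrFun hMv _)
  have hfew : #f.support ≤ t := card_support_le_of_coeff_eq_zero_of_mem_Ico hb hfdeg hgap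
  have hmany : t + 1 ≤ #f.support :=
    add_one_le_card_support_of_pow_X_sub_C_dvd (neg_ne_zero.2 one_ne_zero) (mul_ne_zero hpow hq)
      (hfdeg.trans_le hts) (by rw [← hroot]; exact dvd_mul_right _ q)
  omega

theorem stmt1 (K : Type*) [Field K] (p : ℕ) [CharP K p] (hp : 0 < p)
    (t b s : ℕ) (hb : b ≤ t) (hs : 1 ≤ s) (hts : t + s ≤ p) :
    (toeplitzBinomK K t b s).det ≠ 0 :=
  stmt1_general K p t b s hb hts
end

section
/- For integers b, s, t with 0 ≤ b ≤ t-1 and 1 ≤ s, det M_{t,b,s,s} = det M_{b+s,b,t-b,t-b}, where M_{t,b,s,s} denotes the s×s matrix with (i,j) entry C(t, b+i-j). -/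
open scoped Nat

namespace Matrix

variable {m n R : Type*} [Fintype m] [Fintype n] [DecidableEq m] [DecidableEq n] [CommRing R]

theorem det_mul_det_toBlocks₁₁_adjugate (M : Matrix (m ⊕ n) (m ⊕ n) R) :
    M.det * (adjugate M).toBlocks₁₁.det = M.det ^ Fintype.card m * M.toBlocks₂₂.det := by
  have hMB := M.mul_adjugate
  rw [← fromBlocks_toBlocks M, ← fromBlocks_toBlocks (adjugate _), fromBlocks_multiply,
    ← fromBlocks_one, fromBlocks_smul, fromBlocks_inj, fromBlocks_toBlocks] at hMB
  obtain ⟨h₁₁, -, h₂₁, -⟩ := hMB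
  have hcleared : M * fromBlocks (adjugate M).toBlocks₁₁ 0 (adjugate M).toBlocks₂₁ 1 =
      fromBlocks (M.det • 1) M.toBlocks₁₂ 0 M.toBlocks₂₂ := by
    conv_lhs => arg 1; rw [← fromBlocks_toBlocks M]
    rw [fromBlocks_multiply, h₁₁, h₂₁]
    simp
  have := congrArg det hcleared
  rw [det_mul, det_fromBlocks_zero₁₂, det_fromBlocks_zero₂₁] at this
  simpa [det_smul] using this

theorem det_toBlocks₁₁_adjugate [Nonempty m] (M : Matrix (m ⊕ n) (m ⊕ n) R) :
    (adjugate M).toBlocks₁₁.det = M.det ^ (Fintype.card m - 1) * M.toBlocks₂₂.det := by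
  let X := mvPolynomialX (m ⊕ n) (m ⊕ n) ℤ
  suffices (adjugate X).toBlocks₁₁.det = X.det ^ (Fintype.card m - 1) * X.toBlocks₂₂.det by
    have := congrArg (MvPolynomial.aeval fun p => M p.1 p.2) this
    rw [← mvPolynomialX_mapMatrix_aeval ℤ M, ← AlgHom.map_adjugate]
    simp only [AlgHom.map_det, map_mul, map_pow] at this
    exact this
  apply mul_left_cancel₀ (det_mvPolynomialX_ne_zero (m ⊕ n) ℤ)
  rw [det_mul_det_toBlocks₁₁_adjugate, ← mul_assoc, ← pow_succ',
    Nat.sub_add_cancel Fintype.card_pos]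

end Matrix

noncomputable def finCornersEquiv (n : ℕ) : Fin 2 ⊕ Fin n ≃ Fin (n + 2) :=
  Equiv.ofBijective (Sum.elim ![0, Fin.last (n + 1)] (Fin.castSucc ∘ Fin.succ)) <| by
    refine (Fintype.bijective_iff_injective_and_card _).2 ⟨?_, by simp [add_comm]⟩
    simp only [Function.Injective, Sum.forall, Fin.forall_fin_two]
    simp [Fin.ext_iff]
    exact ⟨fun b => b.isLt.ne', fun b => b.isLt.ne⟩

theorem Matrix.desnanot_jacobi {R : Type*} [CommRing R] {n : ℕ}
    (A : Matrix (Fin (n + 2)) (Fin (n + 2)) R) :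
    A.det * (A.submatrix (Fin.castSucc ∘ Fin.succ) (Fin.castSucc ∘ Fin.succ)).det =
      (A.submatrix Fin.castSucc Fin.castSucc).det * (A.submatrix Fin.succ Fin.succ).det -
      (A.submatrix Fin.castSucc Fin.succ).det * (A.submatrix Fin.succ Fin.castSucc).det := by
  set e := finCornersEquiv n
  have h₁₁ : ((adjugate A).submatrix e e).toBlocks₁₁ =
      !![adjugate A 0 0, adjugate A 0 (Fin.last _);
        adjugate A (Fin.last _) 0, adjugate A (Fin.last _) (Fin.last _)] := by
    ext i j; fin_cases i <;> fin_cases j <;> rfl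
  have h₂₂ : (A.submatrix e e).toBlocks₂₂ =
      A.submatrix (Fin.castSucc ∘ Fin.succ) (Fin.castSucc ∘ Fin.succ) := rfl
  have h := det_toBlocks₁₁_adjugate (A.submatrix e e)
  rw [adjugate_submatrix_equiv_self, det_submatrix_equiv_self, h₁₁, det_fin_two_of] at h
  have hsign : (-1 : R) ^ (n + 1 + (n + 1)) = 1 := Even.neg_one_pow ⟨_, rfl⟩
  simp only [adjugate_fin_succ_eq_det_submatrix, Fin.succAbove_zero, Fin.succAbove_last,
    Fin.val_zero, Fin.val_last, add_zero, zero_add, hsign, pow_zero, Fintype.card_fin, h₂₂] at h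
  linear_combination -h - (A.submatrix Fin.castSucc Fin.succ).det *
    (A.submatrix Fin.succ Fin.castSucc).det * hsign

def factorialProd (n : ℕ) : ℚ := ∏ i ∈ Finset.range n, (i ! : ℚ)

lemma factorialProd_zero : factorialProd 0 = 1 := rfl

lemma factorialProd_succ (n : ℕ) : factorialProd (n + 1) = factorialProd n * n ! :=
  Finset.prod_range_succ _ n

lemma factorialProd_ne_zero (n : ℕ) : factorialProd n ≠ 0 :=
  Finset.prod_ne_zero_iff.2 fun i _ => mod_cast i.factorial_ne_zero

def macMahon (b c s : ℕ) : ℚ :=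
  factorialProd b * factorialProd c * factorialProd s * factorialProd (b + c + s) /
    (factorialProd (b + c) * factorialProd (b + s) * factorialProd (c + s))

section MacMahon

variable (b c s : ℕ)

lemma macMahon_ne_zero : macMahon b c s ≠ 0 := by
  simp [macMahon, factorialProd_ne_zero]

lemma macMahon_comm_right : macMahon b c s = macMahon b s c := by
  rw [macMahon, macMahon, add_right_comm b s c, add_comm s c]
  ring

lemma macMahon_zero_left : macMahon 0 c s = 1 := by
  rw [macMahon, div_eq_one_iff_eq (by simp [factorialProd_ne_zero]), factorialProd_zero]
  ring_nf

lemma macMahon_zero_middle : macMahon b 0 s = 1 := by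
  rw [macMahon, div_eq_one_iff_eq (by simp [factorialProd_ne_zero]), factorialProd_zero]
  ring_nf

lemma macMahon_succ_right :
    macMahon b c (s + 1) = macMahon b c s * (s ! * (b + c + s)! / ((b + s)! * (c + s)!)) := by
  simp only [macMahon, ← add_assoc, factorialProd_succ]
  field_simp

lemma macMahon_succ_middle_mul :
    macMahon b (c + 1) s * (b ! * (c + s)!) = macMahon (b + 1) c s * (c ! * (b + s)!) := by
  simp only [macMahon, add_right_comm _ 1, ← add_assoc, factorialProd_succ]
  field_simp

lemma macMahon_one_right : macMahon b c 1 = (b + c).choose b := by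
  rw [macMahon_succ_right, macMahon_comm_right, macMahon_zero_middle, Nat.cast_add_choose]
  simp

lemma macMahon_condensation (n : ℕ) :
    macMahon (b + 1) (c + 1) (n + 2) * macMahon (b + 1) (c + 1) n =
      macMahon (b + 1) (c + 1) (n + 1) ^ 2 -
        macMahon b (c + 2) (n + 1) * macMahon (b + 2) c (n + 1) := by
  have e₁ := macMahon_succ_right (b + 1) (c + 1) n
  have e₂ := macMahon_succ_right (b + 1) (c + 1) (n + 1)
  have e₃ := macMahon_succ_middle_mul b (c + 1) (n + 1)
  have e₄ := macMahon_succ_middle_mul (b + 1) c (n + 1)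
  simp only [← add_assoc, add_right_comm _ 1, Nat.factorial_succ, Nat.cast_mul, Nat.cast_add,
    Nat.cast_one] at e₁ e₂ e₃ e₄
  rw [show n + 2 = n + 1 + 1 from rfl, show c + 2 = c + 1 + 1 from rfl,
    show b + 2 = b + 1 + 1 from rfl, e₂, eq_div_of_mul_eq (by positivity) e₃,
    eq_div_of_mul_eq (by positivity) e₄.symm, e₁]
  field_simp
  ring

end MacMahon

namespace toeplitzBinom

open Matrix

lemma apply_eq_apply {t b b' s s' : ℕ} {i j : Fin s} {i' j' : Fin s'}
    (h : b + i + j' = b' + i' + j) : toeplitzBinom t b s i j = toeplitzBinom t b' s' i' j' := by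
  simp only [toeplitzBinom, of_apply]
  split_ifs <;> first | omega | rw [show b + i - j = b' + i' - j' by omega]

variable (t b n : ℕ)

lemma submatrix_castSucc_castSucc :
    (toeplitzBinom t b (n + 1)).submatrix Fin.castSucc Fin.castSucc = toeplitzBinom t b n := by
  ext i j; exact apply_eq_apply (by simp)

lemma submatrix_succ_succ :
    (toeplitzBinom t b (n + 1)).submatrix Fin.succ Fin.succ = toeplitzBinom t b n := by
  ext i j; exact apply_eq_apply (by simp; omega)

lemma submatrix_castSucc_succ :
    (toeplitzBinom t (b + 1) (n + 1)).submatrix Fin.castSucc Fin.succ = toeplitzBinom t b n := by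
  ext i j; exact apply_eq_apply (by simp; omega)

lemma submatrix_succ_castSucc :
    (toeplitzBinom t b (n + 1)).submatrix Fin.succ Fin.castSucc = toeplitzBinom t (b + 1) n := by
  ext i j; exact apply_eq_apply (by simp; omega)

lemma submatrix_castSucc_comp_succ :
    (toeplitzBinom t b (n + 2)).submatrix (Fin.castSucc ∘ Fin.succ) (Fin.castSucc ∘ Fin.succ) =
      toeplitzBinom t b n := by
  ext i j; exact apply_eq_apply (by simp; omega)

lemma det_zero_middle : (toeplitzBinom t 0 n).det = 1 := by
  rw [det_of_isLowerTriangular _ fun i j hij => ?_]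
  · simp [toeplitzBinom]
  · have : (i : ℕ) < j := hij
    simp [toeplitzBinom]
    omega

lemma det_self : (toeplitzBinom t t n).det = 1 := by
  rw [det_of_isUpperTriangular fun i j (hij : j < i) => ?_]
  · simp [toeplitzBinom]
  · simp only [toeplitzBinom, of_apply]
    split_ifs
    · rw [Nat.choose_eq_zero_of_lt (by omega), Nat.cast_zero]
    · rfl

theorem det_add_eq_macMahon (s b c : ℕ) :
    ((toeplitzBinom (b + c) b s).det : ℚ) = macMahon b c s := by
  induction s using Nat.twoStepInduction generalizing b c with
  | zero => simp [macMahon_comm_right b c 0, macMahon_zero_middle]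
  | one => simp [macMahon_one_right, toeplitzBinom]
  | more n ih₀ ih₁ =>
    rcases b with _ | b
    · rw [zero_add, det_zero_middle, macMahon_zero_left, Int.cast_one]
    rcases c with _ | c
    · rw [add_zero, det_self, macMahon_zero_middle, Int.cast_one]
    have h := congrArg (Int.cast : ℤ → ℚ)
      (desnanot_jacobi (toeplitzBinom (b + 1 + (c + 1)) (b + 1) (n + 2)))
    rw [submatrix_castSucc_comp_succ, submatrix_castSucc_castSucc, submatrix_succ_succ,
      submatrix_castSucc_succ, submatrix_succ_castSucc] at h
    simp only [Int.cast_mul, Int.cast_sub, show b + 1 + 1 = b + 2 from rfl] at h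
    have i₂ := ih₁ b (c + 2)
    have i₃ := ih₁ (b + 2) c
    rw [show b + (c + 2) = b + 1 + (c + 1) by ring] at i₂
    rw [show b + 2 + c = b + 1 + (c + 1) by ring] at i₃
    rw [ih₀, ih₁, i₂, i₃] at h
    apply mul_right_cancel₀ (macMahon_ne_zero (b + 1) (c + 1) n)
    rw [h, macMahon_condensation, sq]

end toeplitzBinom

theorem stmt2_general (t b s : ℕ) (hb : b + 1 ≤ t) :
    (toeplitzBinom t b s).det = (toeplitzBinom (b + s) b (t - b)).det := by
  obtain ⟨c, rfl⟩ := Nat.exists_eq_add_of_le (Nat.le_of_succ_le hb)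
  rw [Nat.add_sub_cancel_left, ← Int.cast_inj (α := ℚ), toeplitzBinom.det_add_eq_macMahon,
    toeplitzBinom.det_add_eq_macMahon, macMahon_comm_right]

theorem stmt2 (t b s : ℕ) (hb : b + 1 ≤ t) (hs : 1 ≤ s) :
    (toeplitzBinom t b s).det = (toeplitzBinom (b + s) b (t - b)).det :=
  stmt2_general t b s hb
end

section
/- Let k be a field, n ≥ 2, and a_1,...,a_n positive integers with |a_s - a_t| ≤ 1 for all s,t. Let A = k[x_1,...,x_n]/(x_1^{a_1},...,x_n^{a_n}) and σ = Σa_i − n its socle degree. Then the Hilbert function i ↦ dim_k A_i is strictly increasing for 0 ≤ i ≤ σ/2. -/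
open MvPolynomial

/-- The Hilbert function of the monomial complete intersection
`A = k[x₁,…,xₙ]/(x₁^{a₁},…,xₙ^{aₙ})`: the `k`-dimension of the image of the space of
homogeneous polynomials of degree `i` in the quotient. -/
noncomputable def hilbertMonomialCI (k : Type*) [Field k] (n : ℕ) (a : Fin n → ℕ)
    (i : ℕ) : ℕ :=
  Module.finrank k
    ((MvPolynomial.homogeneousSubmodule (Fin n) k i).map
      (Ideal.Quotient.mkₐ k
        (Ideal.span (Set.range fun j : Fin n =>
          (X j : MvPolynomial (Fin n) k) ^ a j))).toLinearMap)

/-!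
Counting standard monomials, `h(i) = dim A_i` is the number of `b` with `bⱼ < aⱼ` and `∑ bⱼ = i`,
i.e. the coefficient of `tⁱ` in `∏ⱼ (1 + t + ⋯ + t^(aⱼ - 1))`; the reflection `bⱼ ↦ aⱼ - 1 - bⱼ`
shows `h(σ - i) = h(i)`. Splitting off the last factor, with `x = aₙ`, gives
`h(i + 1) - h(i) = h'(i + 1) - h'(i + 1 - x)`, where `h'` belongs to the first `n - 1` exponents
(socle degree `σ'`) and vanishes in negative degrees. If `x > i + 1`, the right side is
`h'(i + 1) > 0`, since `|aₛ - aₜ| ≤ 1` gives `i + 1 ≤ σ'`. Otherwise `2(i + 1) ≤ σ' + x - 1`, so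
`i + 1 - x < i + 1` with sum `< σ'`, and `h'(i + 1 - x) < h'(i + 1)` follows from the symmetry of
`h'` and, by induction on `n`, its strict increase up to `σ' / 2` (for `n = 2` this case cannot
occur).
-/

namespace MonomialCI

section HilbertSeries

open Polynomial Finset

variable {ι : Type*} [Fintype ι] (a : ι → ℕ)

def boxPoints [DecidableEq ι] (i : ℕ) : Finset (ι → ℕ) :=
  {b ∈ Fintype.piFinset fun j => range (a j) | ∑ j, b j = i}

@[simp]
lemma mem_boxPoints [DecidableEq ι] {i : ℕ} {b : ι → ℕ} :
    b ∈ boxPoints a i ↔ (∀ j, b j < a j) ∧ ∑ j, b j = i := by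
  simp [boxPoints]

noncomputable def hilbertSeries : ℕ[X] :=
  ∏ j, ∑ c ∈ range (a j), (Polynomial.X : ℕ[X]) ^ c

def socleDegree : ℕ := ∑ j, (a j - 1)

lemma coeff_hilbertSeries [DecidableEq ι] (i : ℕ) :
    (hilbertSeries a).coeff i = #(boxPoints a i) := by
  rw [hilbertSeries, prod_univ_sum, finsetSum_coeff, boxPoints, card_filter]
  refine sum_congr rfl fun b _ => ?_
  rw [prod_pow_eq_pow_sum, Polynomial.coeff_X_pow]
  exact if_congr eq_comm rfl rfl

lemma coeff_hilbertSeries_socleDegree_sub {i : ℕ} (hi : i ≤ socleDegree a) :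
    (hilbertSeries a).coeff (socleDegree a - i) = (hilbertSeries a).coeff i := by
  classical
  rw [coeff_hilbertSeries, coeff_hilbertSeries]
  have reflect_mem {b : ι → ℕ} {s t : ℕ} (hst : s + t = socleDegree a)
      (hb : b ∈ boxPoints a s) : (fun j => a j - 1 - b j) ∈ boxPoints a t := by
    rw [mem_boxPoints] at hb ⊢
    refine ⟨fun j => by have := hb.1 j; omega, ?_⟩
    rw [sum_tsub_distrib _ fun j _ => Nat.le_sub_one_of_lt (hb.1 j), hb.2, ← socleDegree]
    omega
  have reflect_reflect {b : ι → ℕ} {s : ℕ} (hb : b ∈ boxPoints a s) :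
      (fun j : ι => a j - 1 - (a j - 1 - b j)) = b := by
    funext j
    have := ((mem_boxPoints a).mp hb).1 j
    omega
  exact card_nbij' _ _ (fun b hb => reflect_mem (by omega) hb)
    (fun b hb => reflect_mem (by omega) hb) (fun b hb => reflect_reflect hb)
    (fun b hb => reflect_reflect hb)

lemma sub_one_le_socleDegree (j : ι) : a j - 1 ≤ socleDegree a :=
  single_le_sum (f := fun j => a j - 1) (fun _ _ => Nat.zero_le _) (mem_univ j)

lemma hilbertSeries_castSucc {m : ℕ} (a : Fin (m + 1) → ℕ) :
    hilbertSeries a =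
      hilbertSeries (Fin.init a) * ∑ c ∈ range (a (Fin.last m)), Polynomial.X ^ c :=
  Fin.prod_univ_castSucc _

lemma socleDegree_castSucc {m : ℕ} (a : Fin (m + 1) → ℕ) :
    socleDegree a = socleDegree (Fin.init a) + (a (Fin.last m) - 1) :=
  Fin.sum_univ_castSucc _

lemma coeff_hilbertSeries_pos {n : ℕ} (a : Fin n → ℕ) (ha : ∀ j, 1 ≤ a j) {i : ℕ}
    (hi : i ≤ socleDegree a) : 0 < (hilbertSeries a).coeff i := by
  induction n generalizing i with
  | zero => simp_all [socleDegree, hilbertSeries]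
  | succ m ih =>
    rw [socleDegree_castSucc] at hi
    -- the last coordinate takes what the first `m` cannot
    set r := i - min i (socleDegree (Fin.init a))
    have hr : r < a (Fin.last m) := by have := ha (Fin.last m); omega
    have hmem : (i - r, r) ∈ antidiagonal i := by rw [HasAntidiagonal.mem_antidiagonal]; omega
    set g : ℕ[X] := ∑ c ∈ range (a (Fin.last m)), Polynomial.X ^ c
    set p := hilbertSeries (Fin.init a)
    have hterm : 0 < p.coeff (i - r) * g.coeff r := by
      rw [finsetSum_coeff, sum_eq_single_of_mem r (mem_range.mpr hr)]
      · simpa using ih (Fin.init a) (fun j => ha _) (by omega)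
      · intro d _ hd
        rw [Polynomial.coeff_X_pow, if_neg (Ne.symm hd)]
    rw [hilbertSeries_castSucc, Polynomial.coeff_mul]
    exact hterm.trans_le (single_le_sum (f := fun q => p.coeff q.1 * g.coeff q.2)
      (fun _ _ => Nat.zero_le _) hmem)

/-- `(1 - t) (1 + ⋯ + t^(x-1)) = 1 - t^x` read in degree `i + 1`, with no subtraction. -/
lemma coeff_mul_geom_sum_add_coeff_succ {R : Type*} [Semiring R] (p : R[X]) (x i : ℕ) :
    (p * ∑ c ∈ range x, Polynomial.X ^ c).coeff i + p.coeff (i + 1) =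
      (if x ≤ i + 1 then p.coeff (i + 1 - x) else 0) +
        (p * ∑ c ∈ range x, Polynomial.X ^ c).coeff (i + 1) := by
  set g : R[X] := ∑ c ∈ range x, Polynomial.X ^ c
  have key : p * g * Polynomial.X + p = p * Polynomial.X ^ x + p * g :=
    calc p * g * Polynomial.X + p = p * (Polynomial.X * g + 1) := by
          rw [mul_add, mul_one, X_mul, mul_assoc]
      _ = p * (Polynomial.X ^ x + g) := by rw [← geom_sum_succ, geom_sum_succ']
      _ = p * Polynomial.X ^ x + p * g := mul_add _ _ _
  have := congrArg (Polynomial.coeff · (i + 1)) key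
  simpa only [Polynomial.coeff_add, Polynomial.coeff_mul_X, coeff_mul_X_pow'] using this

lemma lt_of_strictMonoOn_Iic_half {β : Type*} [Preorder β] {f : ℕ → β} {s : ℕ}
    (hsymm : ∀ i ≤ s, f (s - i) = f i) (hmono : StrictMonoOn f (Set.Iic (s / 2)))
    {i j : ℕ} (hji : j < i) (hij : i + j < s) : f j < f i := by
  rcases le_or_gt i (s / 2) with hi | hi
  · exact hmono (Set.mem_Iic.mpr (by omega)) (Set.mem_Iic.mpr hi) hji
  · rw [← hsymm i (by omega)]
    exact hmono (Set.mem_Iic.mpr (by omega)) (Set.mem_Iic.mpr (by omega)) (by omega)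

theorem strictMonoOn_coeff_hilbertSeries {n : ℕ} (a : Fin n → ℕ) (hn : 2 ≤ n)
    (ha : ∀ j, 1 ≤ a j) (hdiff : ∀ s t, a s ≤ a t + 1) :
    StrictMonoOn (hilbertSeries a).coeff (Set.Iic (socleDegree a / 2)) := by
  induction n with
  | zero => omega
  | succ m ih =>
    have hσ := socleDegree_castSucc a
    have hx := ha (Fin.last m)
    have hσ_init : a (Fin.last m) - 2 ≤ socleDegree (Fin.init a) := by
      have h₁ := hdiff (Fin.last m) (Fin.castSucc ⟨0, by omega⟩)
      have h₂ : a (Fin.castSucc ⟨0, by omega⟩) - 1 ≤ socleDegree (Fin.init a) :=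
        sub_one_le_socleDegree (Fin.init a) ⟨0, by omega⟩
      omega
    rw [hilbertSeries_castSucc]
    refine strictMonoOn_of_lt_add_one Set.ordConnected_Iic fun i _ _ hi => ?_
    rw [Set.mem_Iic] at hi
    have key : (if a (Fin.last m) ≤ i + 1 then
        (hilbertSeries (Fin.init a)).coeff (i + 1 - a (Fin.last m)) else 0) <
        (hilbertSeries (Fin.init a)).coeff (i + 1) := by
      split_ifs with hxi
      · obtain rfl | hm := (show m = 1 ∨ 2 ≤ m by omega)
        · have h₁ : socleDegree (Fin.init a) = a 0 - 1 := by simp [socleDegree, Fin.init]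
          have h₂ := hdiff 0 (Fin.last 1)
          omega
        · exact lt_of_strictMonoOn_Iic_half
            (fun _ => coeff_hilbertSeries_socleDegree_sub (Fin.init a))
            (ih (Fin.init a) hm (fun j => ha _) (fun s t => hdiff _ _)) (by omega) (by omega)
      · exact coeff_hilbertSeries_pos (Fin.init a) (fun j => ha _) (by omega)
    have hrec := coeff_mul_geom_sum_add_coeff_succ (hilbertSeries (Fin.init a)) (a (Fin.last m)) i
    omega

end HilbertSeries

section Quotient

variable {ι R : Type*} [CommSemiring R] (a : ι → ℕ)

variable (R) in
noncomputable abbrev ideal : Ideal (MvPolynomial ι R) :=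
  Ideal.span (Set.range fun j => X j ^ a j)

lemma mem_ideal_iff {p : MvPolynomial ι R} :
    p ∈ ideal R a ↔ ∀ d ∈ p.support, ∃ j, a j ≤ d j := by
  have hgens : Set.range (fun j => (X j : MvPolynomial ι R) ^ a j) =
      (monomial · 1) '' Set.range fun j => Finsupp.single j (a j) := by
    simp [← Set.range_comp, Function.comp_def, X_pow_eq_monomial]
  rw [ideal, hgens, mem_ideal_span_monomial_image]
  simp [Finsupp.single_le_iff]

def boxExponents : Set (ι →₀ ℕ) := {d | ∀ j, d j < a j}

lemma monomial_mem_ideal {d : ι →₀ ℕ} (hd : d ∉ boxExponents a) (c : R) :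
    monomial d c ∈ ideal R a := by
  simp only [boxExponents, Set.mem_ofPred_eq, not_forall, not_lt] at hd
  rw [mem_ideal_iff]
  intro d' hd'
  rw [Finset.mem_singleton.mp (support_monomial_subset hd')]
  exact hd

lemma eq_zero_of_mem_ideal {p : MvPolynomial ι R}
    (hp : p ∈ restrictSupport R (boxExponents a)) (hI : p ∈ ideal R a) : p = 0 := by
  by_contra hne
  obtain ⟨d, hd⟩ := support_nonempty.mpr hne
  obtain ⟨j, hj⟩ := (mem_ideal_iff a).mp hI d hd
  exact (hj.not_gt (hp hd j))

variable {k : Type*} [Field k]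

lemma map_homogeneousSubmodule_eq_map_restrictSupport (i : ℕ) :
    (homogeneousSubmodule ι k i).map (Ideal.Quotient.mkₐ k (ideal k a)).toLinearMap =
      (restrictSupport k ({d | d.degree = i} ∩ boxExponents a)).map
        (Ideal.Quotient.mkₐ k (ideal k a)).toLinearMap := by
  have hhom : homogeneousSubmodule ι k i = restrictSupport k {d | d.degree = i} :=
    homogeneousSubmodule_eq_finsupp_supported ι k i
  rw [hhom]
  refine le_antisymm ?_ (Submodule.map_mono (restrictSupport_mono k Set.inter_subset_left))
  rw [restrictSupport_eq_span, restrictSupport_eq_span, Submodule.map_span, Submodule.map_span]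
  refine Submodule.span_le.mpr ?_
  rintro _ ⟨_, ⟨d, hdeg, rfl⟩, rfl⟩
  by_cases hd : d ∈ boxExponents a
  · exact Submodule.subset_span ⟨_, ⟨d, ⟨hdeg, hd⟩, rfl⟩, rfl⟩
  · have h0 : Ideal.Quotient.mkₐ k (ideal k a) (monomial d 1) = 0 :=
      Ideal.Quotient.eq_zero_iff_mem.mpr (monomial_mem_ideal a hd 1)
    simp only [AlgHom.toLinearMap_apply, h0, SetLike.mem_coe, Submodule.zero_mem]

lemma finrank_map_homogeneousSubmodule (i : ℕ) :
    Module.finrank k ((homogeneousSubmodule ι k i).map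
      (Ideal.Quotient.mkₐ k (ideal k a)).toLinearMap) =
      Nat.card ↥({d : ι →₀ ℕ | d.degree = i} ∩ boxExponents a) := by
  set V := restrictSupport k ({d : ι →₀ ℕ | d.degree = i} ∩ boxExponents a)
  have hinj : Function.Injective
      ((Ideal.Quotient.mkₐ k (ideal k a)).toLinearMap.domRestrict V) := by
    refine (injective_iff_map_eq_zero _).mpr fun p hp => Subtype.ext ?_
    exact eq_zero_of_mem_ideal a (restrictSupport_mono k Set.inter_subset_right p.2)
      (Ideal.Quotient.eq_zero_iff_mem.mp hp)
  rw [map_homogeneousSubmodule_eq_map_restrictSupport, ← LinearMap.range_domRestrict,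
    LinearMap.finrank_range_of_inj hinj,
    Module.finrank_eq_nat_card_basis (basisRestrictSupport k _)]

end Quotient

lemma hilbertMonomialCI_eq_coeff_hilbertSeries (k : Type*) [Field k] (n : ℕ) (a : Fin n → ℕ)
    (i : ℕ) : hilbertMonomialCI k n a i = (hilbertSeries a).coeff i := by
  rw [coeff_hilbertSeries, hilbertMonomialCI, finrank_map_homogeneousSubmodule,
    ← Nat.card_eq_finsetCard]
  refine Nat.card_congr (Finsupp.equivFunOnFinite.subtypeEquiv fun d => ?_)
  simp [boxExponents, Finsupp.degree_eq_sum, and_comm]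

end MonomialCI

open MonomialCI in
/-- Proposition 6.1(1): if all `a_i ≥ 1` differ pairwise by at most `1`, the Hilbert
function of `k[x₁,…,xₙ]/(x₁^{a₁},…,xₙ^{aₙ})` is strictly increasing for
`0 ≤ i ≤ σ/2`, where `σ = Σ aᵢ − n` is the socle degree. -/
theorem stmt6 {k : Type*} [Field k] (n : ℕ) (hn : 2 ≤ n) (a : Fin n → ℕ)
    (ha : ∀ i, 1 ≤ a i) (hdiff : ∀ s t : Fin n, a s ≤ a t + 1) :
    ∀ i : ℕ, 1 ≤ i → 2 * i ≤ (∑ j, a j) - n →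
      hilbertMonomialCI k n a (i - 1) < hilbertMonomialCI k n a i := by
  intro i hi hσ
  have hsocle : socleDegree a = (∑ j, a j) - n := by
    rw [socleDegree, Finset.sum_tsub_distrib _ fun j _ => ha j]
    simp
  rw [hilbertMonomialCI_eq_coeff_hilbertSeries, hilbertMonomialCI_eq_coeff_hilbertSeries]
  exact strictMonoOn_coeff_hilbertSeries a hn ha hdiff (Set.mem_Iic.mpr (by omega))
    (Set.mem_Iic.mpr (by omega)) (by omega)
end

section
/- Let k be a field, d a positive integer, and suppose that every homogeneous element of degree < d − ⌊γ/2⌋ in the colon ideal (x_1^d, x_2^d) : (x_1+x_2)^γ of k[x_1,x_2] lies in (x_1^d, x_2^d), where γ = 2c is even. Then every homogeneous element of degree < d − c − 1 in (x_1^d, x_2^d) : (x_1+x_2)^{2c+1} lies in (x_1^d, x_2^d). -/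
/-!
Multiplying by `x₁ + x₂` puts `f` into the even-exponent colon ideal in degree `m + 1 < d - c`.
But `(x₁^d, x₂^d)` contains no nonzero homogeneous element of degree `< d`, so `f (x₁ + x₂) = 0`,
hence `f = 0` since `k[x₁, x₂]` is a domain.
-/

open MvPolynomial

namespace MvPolynomial

variable {σ R : Type*} [CommSemiring R]

theorem IsHomogeneous.eq_zero_of_mem_span_X_pow {p : MvPolynomial σ R} {n d : ℕ}
    (hp : p.IsHomogeneous n) (hn : n < d)
    (hmem : p ∈ Ideal.span (Set.range fun i : σ => (X i : MvPolynomial σ R) ^ d)) :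
    p = 0 := by
  have hrange : (Set.range fun i : σ => (X i : MvPolynomial σ R) ^ d) =
      (fun s => monomial s (1 : R)) '' Set.range fun i => Finsupp.single i d := by
    rw [← Set.range_comp]
    simp only [Function.comp_def, X_pow_eq_monomial]
  rw [hrange, mem_ideal_span_monomial_image] at hmem
  refine support_eq_empty.mp (Finset.eq_empty_of_forall_notMem fun s hs => ?_)
  obtain ⟨_, ⟨i, rfl⟩, hle⟩ := hmem s hs
  have hd : d ≤ s.degree := (Finsupp.single_le_iff.mp hle).trans (Finsupp.le_degree i s)
  have hs : s.degree = n := by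
    rw [Finsupp.degree_eq_weight_one]
    exact hp (mem_support_iff.mp hs)
  omega

end MvPolynomial

theorem stmt8_general {k : Type*} [Field k] (d : ℕ) (c : ℕ)
    (I : Ideal (MvPolynomial (Fin 2) k))
    (hI : I = Ideal.span {(X 0 : MvPolynomial (Fin 2) k) ^ d, (X 1) ^ d})
    (hyp : ∀ (m : ℕ) (f : MvPolynomial (Fin 2) k),
      f ∈ homogeneousSubmodule (Fin 2) k m →
      f * (X 0 + X 1) ^ (2 * c) ∈ I →
      (m : ℤ) < (d : ℤ) - c → f ∈ I) :
    ∀ (m : ℕ) (f : MvPolynomial (Fin 2) k),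
      f ∈ homogeneousSubmodule (Fin 2) k m →
      f * (X 0 + X 1) ^ (2 * c + 1) ∈ I →
      (m : ℤ) < (d : ℤ) - c - 1 → f ∈ I := by
  intro m f hf hfI hm
  have hg : (f * (X 0 + X 1)).IsHomogeneous (m + 1) :=
    (hf : f.IsHomogeneous m).mul ((isHomogeneous_X k 0).add (isHomogeneous_X k 1))
  have hgI : f * (X 0 + X 1) ∈ I :=
    hyp (m + 1) _ hg (by rwa [mul_assoc, ← pow_succ']) (by push_cast; omega)
  have hg0 : f * (X 0 + X 1) = 0 := by
    refine hg.eq_zero_of_mem_span_X_pow (d := d) (by omega) (Ideal.span_mono ?_ (hI ▸ hgI))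
    exact Set.pair_subset (Set.mem_range_self 0) (Set.mem_range_self 1)
  have hX : (X 0 + X 1 : MvPolynomial (Fin 2) k) ≠ 0 := by
    intro h
    simpa using congrArg (eval (Pi.single 0 1)) h
  rw [(mul_eq_zero.mp hg0).resolve_right hX]
  exact I.zero_mem

/-- Observation 3.5: in `k[x₁,x₂]`, if every homogeneous element of
`(x₁^d, x₂^d) : (x₁+x₂)^{2c}` of degree `< d − c` lies in `(x₁^d, x₂^d)`, then every
homogeneous element of `(x₁^d, x₂^d) : (x₁+x₂)^{2c+1}` of degree `< d − c − 1` lies in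
`(x₁^d, x₂^d)`. -/
theorem stmt8 {k : Type*} [Field k] (d : ℕ) (hd : 1 ≤ d) (c : ℕ)
    (I : Ideal (MvPolynomial (Fin 2) k))
    (hI : I = Ideal.span {(X 0 : MvPolynomial (Fin 2) k) ^ d, (X 1) ^ d})
    (hyp : ∀ (m : ℕ) (f : MvPolynomial (Fin 2) k),
      f ∈ homogeneousSubmodule (Fin 2) k m →
      f * (X 0 + X 1) ^ (2 * c) ∈ I →
      (m : ℤ) < (d : ℤ) - c → f ∈ I) :
    ∀ (m : ℕ) (f : MvPolynomial (Fin 2) k),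
      f ∈ homogeneousSubmodule (Fin 2) k m →
      f * (X 0 + X 1) ^ (2 * c + 1) ∈ I →
      (m : ℤ) < (d : ℤ) - c - 1 → f ∈ I :=
  stmt8_general d c I hI hyp
end

section
/- Let k be a field of characteristic p > 0, and let d = k₀q + r with q = p^e (e ≥ 1), 1 ≤ k₀, 0 ≤ r ≤ q−1. If there is a nonzero homogeneous syzygy of degree D on x_1^{k₀}, x_2^{k₀}, x_3^{k₀}, (x_1+x_2+x_3)^{k₀} in k[x_1,x_2,x_3], then there is a nonzero homogeneous syzygy of degree qD + 4r on x_1^d, x_2^d, x_3^d, (x_1+x_2+x_3)^d. -/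
open MvPolynomial

/-- Lemma 4.1(1) (the `n = 4` Frobenius construction): let `char k = p > 0`,
`q = pᵉ` with `e ≥ 1`, and `d = k₀q + r` with `k₀ ≥ 1`, `0 ≤ r ≤ q−1`.  If there is a
nonzero homogeneous syzygy of degree `D` on `x₁^{k₀}, x₂^{k₀}, x₃^{k₀}, (x₁+x₂+x₃)^{k₀}`
in `k[x₁,x₂,x₃]` (so its entries are homogeneous of degree `D − k₀`), then there is a
nonzero homogeneous syzygy of degree `qD + 4r` on
`x₁^d, x₂^d, x₃^d, (x₁+x₂+x₃)^d`. -/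
theorem stmt15 {k : Type*} [Field k] (p : ℕ) [CharP k p] (hp : 0 < p)
    (e q k₀ r d : ℕ) (he : 1 ≤ e) (hq : q = p ^ e)
    (hk₀ : 1 ≤ k₀) (hr : r ≤ q - 1) (hd : d = k₀ * q + r)
    (D : ℕ) (hDk : k₀ ≤ D)
    (v : Fin 4 → MvPolynomial (Fin 3) k) (hv : v ≠ 0)
    (hsyz : v 0 * (X 0 : MvPolynomial (Fin 3) k) ^ k₀ + v 1 * (X 1) ^ k₀ +
      v 2 * (X 2) ^ k₀ + v 3 * (X 0 + X 1 + X 2) ^ k₀ = 0)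
    (hhom : ∀ i, v i ∈ homogeneousSubmodule (Fin 3) k (D - k₀)) :
    ∃ w : Fin 4 → MvPolynomial (Fin 3) k, w ≠ 0 ∧
      w 0 * (X 0 : MvPolynomial (Fin 3) k) ^ d + w 1 * (X 1) ^ d +
        w 2 * (X 2) ^ d + w 3 * (X 0 + X 1 + X 2) ^ d = 0 ∧
      ∀ i, w i ∈ homogeneousSubmodule (Fin 3) k (q * D + 4 * r - d) := by
  haveI : NeZero p := ⟨hp.ne'⟩
  haveI : Fact p.Prime := ⟨CharP.char_is_prime_of_pos k p |>.out⟩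
  have hqpos : 0 < q := by subst hq; exact pow_pos hp e
  set S : MvPolynomial (Fin 3) k := X 0 + X 1 + X 2 with hS
  set w : Fin 4 → MvPolynomial (Fin 3) k :=
    ![v 0 ^ q * ((X 1) ^ r * (X 2) ^ r * S ^ r),
      v 1 ^ q * ((X 0) ^ r * (X 2) ^ r * S ^ r),
      v 2 ^ q * ((X 0) ^ r * (X 1) ^ r * S ^ r),
      v 3 ^ q * ((X 0) ^ r * (X 1) ^ r * (X 2) ^ r)] with hw
  have hSne : S ≠ 0 := by
    intro h
    have := congrArg (coeff (Finsupp.single 0 1)) h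
    simp [hS, coeff_X', Finsupp.single_eq_single_iff] at this
  have hfrob : (v 0 * (X 0 : MvPolynomial (Fin 3) k) ^ k₀) ^ q + (v 1 * (X 1) ^ k₀) ^ q +
      (v 2 * (X 2) ^ k₀) ^ q + (v 3 * S ^ k₀) ^ q = 0 := by
    subst hq
    rw [← add_pow_char_pow, ← add_pow_char_pow, ← add_pow_char_pow, hsyz, zero_pow]
    exact (pow_pos hp e).ne'
  refine ⟨w, ?_, ?_, ?_⟩
  · -- nonzero
    obtain ⟨i, hi⟩ : ∃ i, v i ≠ 0 := by
      by_contra h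
      push_neg at h
      exact hv (funext h)
    intro h0
    have hwi : w i = 0 := by rw [h0]; rfl
    have : w i ≠ 0 := by
      fin_cases i <;>
        simp only [hw, Matrix.cons_val_zero, Matrix.cons_val_one, Matrix.head_cons,
          Matrix.cons_val_two, Matrix.tail_cons, Matrix.cons_val_three] <;>
        (apply mul_ne_zero (pow_ne_zero _ hi);
         apply mul_ne_zero (mul_ne_zero (pow_ne_zero _ ?_) (pow_ne_zero _ ?_)) (pow_ne_zero _ ?_)) <;>
        first | exact X_ne_zero _ | exact hSne
    exact this hwi
  · -- syzygy
    subst hd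
    simp only [hw, Matrix.cons_val_zero, Matrix.cons_val_one, Matrix.head_cons,
      Matrix.cons_val_two, Matrix.tail_cons, Matrix.cons_val_three]
    linear_combination ((X 0 : MvPolynomial (Fin 3) k) ^ r * (X 1) ^ r * (X 2) ^ r * S ^ r) * hfrob
  · -- homogeneous
    have hXh : ∀ j : Fin 3, (X j : MvPolynomial (Fin 3) k).IsHomogeneous 1 :=
      fun j => isHomogeneous_X _ _
    have hSh : S.IsHomogeneous 1 := by
      have := ((hXh 0).add (hXh 1)).add (hXh 2)
      simpa [hS] using this
    have hvh : ∀ i, (v i).IsHomogeneous (D - k₀) := fun i => (hhom i)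
    have hdeg : (D - k₀) * q + (1 * r + 1 * r + 1 * r) = q * D + 4 * r - d := by
      have h1 : (D - k₀) * q + k₀ * q = D * q := by
        rw [← Nat.add_mul, Nat.sub_add_cancel hDk]
      have h2 : q * D = D * q := Nat.mul_comm _ _
      omega
    intro i
    rw [mem_homogeneousSubmodule, ← hdeg]
    fin_cases i
    · exact ((hvh 0).pow q).mul ((((hXh 1).pow r).mul ((hXh 2).pow r)).mul (hSh.pow r))
    · exact ((hvh 1).pow q).mul ((((hXh 0).pow r).mul ((hXh 2).pow r)).mul (hSh.pow r))
    · exact ((hvh 2).pow q).mul ((((hXh 0).pow r).mul ((hXh 1).pow r)).mul (hSh.pow r))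
    · exact ((hvh 3).pow q).mul ((((hXh 0).pow r).mul ((hXh 1).pow r)).mul ((hXh 2).pow r))
end

section
/- Let k be a field of characteristic p > 0 and let d, q be integers with q = p^e for some e ≥ 1 and q/2 < d ≤ q. Then [x_1^{q-d},...,x_{n-1}^{q-d}, −(x_1+...+x_{n-1})^{q-d}]^t is a nonzero homogeneous syzygy of degree q on x_1^d,...,x_{n-1}^d,(x_1+...+x_{n-1})^d in k[x_1,...,x_{n-1}], and it is not a k[x_1,...,x_{n-1}]-combination of Koszul relations (since q − d < d). -/
open MvPolynomial

noncomputable section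

/-- The row of forms `[x₁^d, …, x_{n-1}^d, (x₁+⋯+x_{n-1})^d]` in `k[x₁,…,x_{n-1}]`
(here with `m = n−1` variables and `m+1` forms). -/
def powForms (k : Type*) [Field k] (m d : ℕ) : Fin (m + 1) → MvPolynomial (Fin m) k :=
  Fin.snoc (fun j : Fin m => (X j : MvPolynomial (Fin m) k) ^ d)
    ((∑ j : Fin m, (X j : MvPolynomial (Fin m) k)) ^ d)

/-- The submodule generated by the Koszul relations on the forms. -/
def powKos (k : Type*) [Field k] (m d : ℕ) :
    Submodule (MvPolynomial (Fin m) k) (Fin (m + 1) → MvPolynomial (Fin m) k) :=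
  Submodule.span (MvPolynomial (Fin m) k)
    {w | ∃ i j : Fin (m + 1),
      w = Pi.single i (powForms k m d j) - Pi.single j (powForms k m d i)}

/-! In characteristic `p` the Frobenius gives `(x₁+⋯+xₘ)^q = x₁^q+⋯+xₘ^q`, which is the syzygy
relation. Every entry of a Koszul relation on forms of degree `d` is `0` or one of the forms, so
no entry of a combination of Koszul relations has a monomial of degree `< d`; but the syzygy has
the entry `x₁^(q-d)` with `q - d < d`. -/

namespace MvPolynomial

def orderGeIdeal (σ R : Type*) [CommSemiring R] (d : ℕ) : Ideal (MvPolynomial σ R) where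
  carrier := {f | ∀ s : σ →₀ ℕ, s.degree < d → coeff s f = 0}
  zero_mem' _ _ := coeff_zero _
  add_mem' hf hg s hs := by rw [coeff_add, hf s hs, hg s hs, add_zero]
  smul_mem' a f hf s hs := by
    classical
    rw [smul_eq_mul, coeff_mul]
    refine Finset.sum_eq_zero fun x hx => ?_
    rw [Finset.HasAntidiagonal.mem_antidiagonal] at hx
    have hx2 : x.2.degree ≤ s.degree := by
      rw [← hx, map_add]
      exact Nat.le_add_left _ _
    rw [hf x.2 (hx2.trans_lt hs), mul_zero]

variable {σ R : Type*} [CommSemiring R]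

theorem IsHomogeneous.mem_orderGeIdeal {f : MvPolynomial σ R} {n d : ℕ}
    (hf : f.IsHomogeneous n) (hdn : d ≤ n) : f ∈ orderGeIdeal σ R d :=
  fun _ hs => hf.coeff_eq_zero (by omega)

theorem X_pow_notMem_orderGeIdeal [Nontrivial R] (i : σ) {n d : ℕ} (hnd : n < d) :
    (X i : MvPolynomial σ R) ^ n ∉ orderGeIdeal σ R d := fun h => by
  classical
  have := h (Finsupp.single i n) (by rwa [Finsupp.degree_single])
  rw [X_pow_eq_monomial, coeff_monomial, if_pos rfl] at this
  exact one_ne_zero this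

theorem isHomogeneous_sum_X_pow [Fintype σ] (n : ℕ) :
    ((∑ i : σ, (X i : MvPolynomial σ R)) ^ n).IsHomogeneous n := by
  simpa using (IsHomogeneous.sum _ _ 1 fun i _ => isHomogeneous_X R i).pow n

end MvPolynomial

theorem Submodule.single_mem_pi_univ {R ι : Type*} {φ : ι → Type*} [Semiring R] [DecidableEq ι]
    [∀ i, AddCommMonoid (φ i)] [∀ i, Module R (φ i)] {p : ∀ i, Submodule R (φ i)} {i : ι}
    {x : φ i} (hx : x ∈ p i) : Pi.single i x ∈ Submodule.pi Set.univ p := fun t _ => by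
  rcases eq_or_ne t i with rfl | hti
  · simpa using hx
  · simp [hti]

theorem powForms_isHomogeneous (k : Type*) [Field k] (m d : ℕ) (i : Fin (m + 1)) :
    (powForms k m d i).IsHomogeneous d := by
  induction i using Fin.lastCases with
  | last => simpa [powForms] using isHomogeneous_sum_X_pow d
  | cast j => simpa [powForms] using isHomogeneous_X_pow j d

theorem powKos_le_pi_orderGeIdeal (k : Type*) [Field k] (m d : ℕ) :
    powKos k m d ≤ Submodule.pi Set.univ fun _ => orderGeIdeal (Fin m) k d := by
  refine Submodule.span_le.2 ?_
  rintro _ ⟨i, j, rfl⟩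
  have hmem : ∀ l, powForms k m d l ∈ orderGeIdeal (Fin m) k d := fun l =>
    (powForms_isHomogeneous k m d l).mem_orderGeIdeal le_rfl
  exact Submodule.sub_mem _ (Submodule.single_mem_pi_univ (hmem j))
    (Submodule.single_mem_pi_univ (hmem i))

def frobeniusSyzygy (k : Type*) [Field k] (m n : ℕ) : Fin (m + 1) → MvPolynomial (Fin m) k :=
  Fin.snoc (fun j : Fin m => (X j : MvPolynomial (Fin m) k) ^ n)
    (-((∑ j : Fin m, (X j : MvPolynomial (Fin m) k)) ^ n))

section FrobeniusSyzygy

variable (k : Type*) [Field k] (m : ℕ)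

theorem frobeniusSyzygy_mem_homogeneousSubmodule (n : ℕ) (i : Fin (m + 1)) :
    frobeniusSyzygy k m n i ∈ homogeneousSubmodule (Fin m) k n := by
  induction i using Fin.lastCases with
  | last => simpa [frobeniusSyzygy] using isHomogeneous_sum_X_pow (σ := Fin m) (R := k) n
  | cast j => simpa [frobeniusSyzygy] using isHomogeneous_X_pow j n

theorem sum_frobeniusSyzygy_mul_powForms (p : ℕ) [ExpChar k p] (e d : ℕ) (hd : d ≤ p ^ e) :
    ∑ i : Fin (m + 1), frobeniusSyzygy k m (p ^ e - d) i * powForms k m d i = 0 := by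
  simp only [Fin.sum_univ_castSucc, frobeniusSyzygy, powForms, Fin.snoc_castSucc, Fin.snoc_last,
    neg_mul, ← pow_add, Nat.sub_add_cancel hd, sum_pow_char_pow]
  exact add_neg_cancel _

theorem frobeniusSyzygy_notMem_powKos (hm : 1 ≤ m) (n d : ℕ) (hnd : n < d) :
    frobeniusSyzygy k m n ∉ powKos k m d := fun h => by
  have := powKos_le_pi_orderGeIdeal k m d h (Fin.castSucc ⟨0, hm⟩) trivial
  rw [frobeniusSyzygy, Fin.snoc_castSucc] at this
  exact X_pow_notMem_orderGeIdeal _ hnd this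

end FrobeniusSyzygy

theorem stmt16_general {k : Type*} [Field k] (p : ℕ) [CharP k p] (hp : 0 < p)
    (e q d m : ℕ) (hq : q = p ^ e) (hm : 1 ≤ m)
    (hd1 : q < 2 * d) (hd2 : d ≤ q)
    (v : Fin (m + 1) → MvPolynomial (Fin m) k)
    (hv : v = Fin.snoc (fun j : Fin m => (X j : MvPolynomial (Fin m) k) ^ (q - d))
      (-((∑ j : Fin m, (X j : MvPolynomial (Fin m) k)) ^ (q - d)))) :
    (∑ i : Fin (m + 1), v i * powForms k m d i) = 0 ∧
      v ≠ 0 ∧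
      (∀ i, v i ∈ homogeneousSubmodule (Fin m) k (q - d)) ∧
      v ∉ powKos k m d := by
  change v = frobeniusSyzygy k m (q - d) at hv
  subst hv hq
  have : Fact p.Prime := ⟨(CharP.char_is_prime_or_zero k p).resolve_right hp.ne'⟩
  have not_koszul := frobeniusSyzygy_notMem_powKos k m hm (p ^ e - d) d (by omega)
  exact ⟨sum_frobeniusSyzygy_mul_powForms k m p e d hd2, fun h => not_koszul (h ▸ zero_mem _),
    frobeniusSyzygy_mem_homogeneousSubmodule k m _, not_koszul⟩

/-- Lemma 6.2(3) (construction): let `char k = p > 0`, `q = pᵉ` with `e ≥ 1` and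
`q/2 < d ≤ q`.  Then `[x₁^{q−d},…,x_{n-1}^{q−d}, −(x₁+⋯+x_{n-1})^{q−d}]ᵗ` is a nonzero
homogeneous syzygy of degree `q` (entries of degree `q − d`) on
`x₁^d,…,x_{n-1}^d,(x₁+⋯+x_{n-1})^d`, and it is not a combination of Koszul relations. -/
theorem stmt16 {k : Type*} [Field k] (p : ℕ) [CharP k p] (hp : 0 < p)
    (e q d m : ℕ) (he : 1 ≤ e) (hq : q = p ^ e) (hm : 1 ≤ m)
    (hd1 : q < 2 * d) (hd2 : d ≤ q)
    (v : Fin (m + 1) → MvPolynomial (Fin m) k)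
    (hv : v = Fin.snoc (fun j : Fin m => (X j : MvPolynomial (Fin m) k) ^ (q - d))
      (-((∑ j : Fin m, (X j : MvPolynomial (Fin m) k)) ^ (q - d)))) :
    (∑ i : Fin (m + 1), v i * powForms k m d i) = 0 ∧
      v ≠ 0 ∧
      (∀ i, v i ∈ homogeneousSubmodule (Fin m) k (q - d)) ∧
      v ∉ powKos k m d :=
  stmt16_general p hp e q d m hq hm hd1 hd2 v hv

end
end
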